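/- Let f(x₁,x₂) = a·cos(2π x₁ + φ) + b·cos(2π x₂ + ψ) with a, b > 0 and a ≠ b. Then the zero set f⁻¹(0) ⊆ ℝ² contains no compact connected component; equivalently, every connected component of f⁻¹(0) is unbounded. -/

import Mathlib

open Real

/-- Through every zero of `f`, when `a < b`, there is a continuous global graph
`t ↦ (t, g t)` inside the zero set. -/
lemma curve_key (a b φ ψ u v : ℝ) (ha : 0 < a) (hlt : a < b)
    (hz : a * Real.cos (2 * π * u + φ) + b * Real.cos (2 * π * v + ψ) = 0) :
    ∃ g : ℝ → ℝ, Continuous g ∧ g u = v ∧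
      ∀ t, a * Real.cos (2 * π * t + φ) + b * Real.cos (2 * π * g t + ψ) = 0 := by
  have hb : 0 < b := ha.trans hlt
  set c : ℝ → ℝ := fun t => -(a / b) * Real.cos (2 * π * t + φ) with hc
  have hcb : ∀ t, -1 ≤ c t ∧ c t ≤ 1 := by
    intro t
    have h1 : |c t| ≤ a / b := by
      rw [hc]
      calc |(-(a / b) * Real.cos (2 * π * t + φ))|
          = (a / b) * |Real.cos (2 * π * t + φ)| := by
            rw [abs_mul, abs_neg, abs_of_pos (div_pos ha hb)]
        _ ≤ (a / b) * 1 := by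
            exact mul_le_mul_of_nonneg_left (Real.abs_cos_le_one _) (le_of_lt (div_pos ha hb))
        _ = a / b := mul_one _
    have h2 : a / b ≤ 1 := by
      rw [div_le_one hb]; exact hlt.le
    constructor
    · linarith [neg_abs_le (c t)]
    · linarith [le_abs_self (c t)]
  have h0 : Real.cos (Real.arccos (c u)) = Real.cos (2 * π * v + ψ) := by
    rw [Real.cos_arccos (hcb u).1 (hcb u).2]
    have hcu : b * c u = -(a * Real.cos (2 * π * u + φ)) := by
      rw [hc]; field_simp
    have : b * Real.cos (2 * π * v + ψ) = b * c u := by linarith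
    exact (mul_left_cancel₀ hb.ne' this).symm
  obtain ⟨k, σ, hσ, heq⟩ : ∃ (k : ℤ) (σ : ℝ),
      (∀ θ : ℝ, Real.cos (σ * θ) = Real.cos θ) ∧
      2 * π * v + ψ = σ * Real.arccos (c u) + 2 * π * k := by
    obtain ⟨k, h | h⟩ := Real.cos_eq_cos_iff.mp h0
    · exact ⟨k, 1, fun θ => by rw [one_mul], by rw [h]; ring⟩
    · exact ⟨k, -1, fun θ => by rw [neg_one_mul, Real.cos_neg], by rw [h]; ring⟩
  refine ⟨fun t => (σ * Real.arccos (c t) + 2 * π * k - ψ) / (2 * π), ?_, ?_, ?_⟩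
  · apply Continuous.div_const
    apply Continuous.sub _ continuous_const
    apply Continuous.add _ continuous_const
    exact continuous_const.mul (Real.continuous_arccos.comp (by fun_prop))
  · have hπ : (2 * π) ≠ 0 := by positivity
    field_simp
    linarith
  · intro t
    have hπ : (2 * π) ≠ 0 := by positivity
    have harg : 2 * π * ((σ * Real.arccos (c t) + 2 * π * k - ψ) / (2 * π)) + ψ
        = σ * Real.arccos (c t) + (k : ℝ) * (2 * π) := by
      field_simp; ring
    rw [harg, Real.cos_add_int_mul_two_pi, hσ, Real.cos_arccos (hcb t).1 (hcb t).2, hc]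
    field_simp
    ring

/-- If a set contains a continuous curve through `x` whose norm dominates `|t|`,
then the connected component of `x` in the set is unbounded and noncompact. -/
lemma unbdd_of_curve {S : Set (ℝ × ℝ)} {x : ℝ × ℝ} (p : ℝ → ℝ × ℝ) (hp : Continuous p)
    (hx : ∃ t, p t = x) (hS : ∀ t, p t ∈ S) (hgrow : ∀ t, |t| ≤ ‖p t‖) :
    ¬ Bornology.IsBounded (connectedComponentIn S x) ∧
    ¬ IsCompact (connectedComponentIn S x) := by
  have hsub : Set.range p ⊆ connectedComponentIn S x := by
    apply (isPreconnected_range hp).subset_connectedComponentIn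
    · obtain ⟨t, ht⟩ := hx; exact ⟨t, ht⟩
    · rintro y ⟨t, rfl⟩; exact hS t
  have hnb : ¬ Bornology.IsBounded (connectedComponentIn S x) := by
    intro h
    obtain ⟨C, hC⟩ := isBounded_iff_forall_norm_le.mp h
    have h1 := hC _ (hsub ⟨|C| + 1, rfl⟩)
    have h2 := hgrow (|C| + 1)
    have h3 : |(|C| + 1)| = |C| + 1 := abs_of_nonneg (by positivity)
    rw [h3] at h2
    linarith [le_abs_self C, h2.trans h1]
  exact ⟨hnb, fun h => hnb h.isBounded⟩

/-- For `f(x₁,x₂) = a cos(2πx₁+φ) + b cos(2πx₂+ψ)` with `a,b > 0`, `a ≠ b`,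
the zero set `f⁻¹(0)` has no compact connected component: every connected
component of it is unbounded (hence non-compact). -/
theorem cilleruelo_field_no_compact_nodal_component
    (a b φ ψ : ℝ) (ha : 0 < a) (hb : 0 < b) (hab : a ≠ b)
    (f : ℝ × ℝ → ℝ)
    (hf : ∀ x : ℝ × ℝ, f x = a * Real.cos (2 * π * x.1 + φ) + b * Real.cos (2 * π * x.2 + ψ)) :
    ∀ x : ℝ × ℝ, f x = 0 →
      ¬ Bornology.IsBounded (connectedComponentIn {y : ℝ × ℝ | f y = 0} x) ∧
      ¬ IsCompact (connectedComponentIn {y : ℝ × ℝ | f y = 0} x) := by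
  intro x hx
  rw [hf] at hx
  rcases lt_or_gt_of_ne hab with hlt | hlt
  · obtain ⟨g, hgc, hgu, hg0⟩ := curve_key a b φ ψ x.1 x.2 ha hlt hx
    apply unbdd_of_curve (fun t => (t, g t)) (by fun_prop)
    · exact ⟨x.1, by simp [hgu]⟩
    · intro t; simp only [Set.mem_setOf_eq, hf]; exact hg0 t
    · intro t
      have := norm_fst_le ((t, g t) : ℝ × ℝ)
      simpa [Real.norm_eq_abs] using this
  · obtain ⟨g, hgc, hgu, hg0⟩ := curve_key b a ψ φ x.2 x.1 hb hlt (by linarith)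
    apply unbdd_of_curve (fun t => (g t, t)) (by fun_prop)
    · exact ⟨x.2, by simp [hgu]⟩
    · intro t
      simp only [Set.mem_setOf_eq, hf]
      have := hg0 t; linarith
    · intro t
      have := norm_snd_le ((g t, t) : ℝ × ℝ)
      simpa [Real.norm_eq_abs] using this
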